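/- arXiv:1702.06969 — 3 statements merged into one kernel-verified Lean document; each statement's English description precedes it below -/
import Mathlib

section
/- Let G be a finite simple graph with nonnegative edge weights x, such that every odd cycle of G has total weight at least 1, and suppose 0 ≤ x_e < δ ≤ 1 for every edge e of G. Then every odd cycle C in G contains a pair of vertices u, v on C satisfying d_x(u, v) > (1 − δ)/2. -/
open SimpleGraph

/-- The weight of a walk: the sum of the weights of its edges, counted with multiplicity. -/
def walkWeight {V : Type*} {G : SimpleGraph V} (x : Sym2 V → ℝ) {u v : V}
    (p : G.Walk u v) : ℝ :=
  (p.edges.map x).sum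

/-- The shortest-path distance between `u` and `v` induced by the edge weights `x`. -/
noncomputable def wdist {V : Type*} (G : SimpleGraph V) (x : Sym2 V → ℝ) (u v : V) : ℝ :=
  sInf {r | ∃ p : G.Walk u v, walkWeight x p = r}

/-! Suppose every vertex of the odd closed walk `C` through `t` were at distance less than `r`
from `t`, where `r` exceeds `(1 - δ)/2` by so little that `2r + x e ≤ 1` on the finitely many edges
of `C`, and pick walks lighter than `r` from each vertex of `C` to `t`. At the
two ends of an edge `e` of `C` these walks must have lengths of the parities dictated by `C`:
otherwise, joined through `e`, they form an odd closed walk of weight `< 2r + x e ≤ 1`, while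
every odd closed walk contains the edges of an odd cycle and so weighs at least `1`. Carried once
around `C`, the parity argument produces an odd closed walk at `t` of weight `< r < 1`. -/

namespace SimpleGraph.Walk

open List

variable {V : Type*} {G : SimpleGraph V}

theorem exists_isPath_or_odd_isCycle_of_edges_sublist {u v : V} (p : G.Walk u v) :
    (∃ q : G.Walk u v, q.IsPath ∧ Even (q.length + p.length) ∧ q.edges <+ p.edges) ∨
      ∃ (w : V) (c : G.Walk w w), c.IsCycle ∧ Odd c.length ∧ c.edges <+ p.edges := by
  classical
  induction p with
  | nil => exact .inl ⟨nil, .nil, by simp, by simp⟩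
  | @cons u w v h p ih =>
    rcases ih with ⟨q, hq, hpar, hsub⟩ | ⟨w', c, hc, hodd, hsub⟩
    swap
    · exact .inr ⟨w', c, hc, hodd, hsub.trans (List.sublist_cons_self _ _)⟩
    by_cases hu : u ∈ q.support
    swap
    · exact .inl ⟨cons h q, hq.cons hu, by simp only [length_cons]; grind, by simpa using hsub⟩
    -- `q` returns to `u`: split it there, closing the loop `u → w ⇝ u`.
    have hsplit := q.take_spec hu
    set q₁ := q.takeUntil u hu
    set q₂ := q.dropUntil u hu
    have hlen : q.length = q₁.length + q₂.length := by rw [← hsplit, length_append]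
    have hsub₁ : q₁.edges <+ p.edges := by
      refine List.Sublist.trans ?_ hsub
      rw [← hsplit, edges_append]
      exact List.sublist_append_left _ _
    have hsub₂ : q₂.edges <+ p.edges := by
      refine List.Sublist.trans ?_ hsub
      rw [← hsplit, edges_append]
      exact List.sublist_append_right _ _
    rcases Nat.even_or_odd q₁.length with heven | hodd₁
    · refine .inr ⟨u, cons h q₁, ?_, by simpa using heven.add_one, by simpa using hsub₁⟩
      refine (cons_isCycle_iff _ _).2 ⟨hq.takeUntil hu, fun he => ?_⟩
      have := (hq.takeUntil hu).length_eq_one_of_mem_edges (Sym2.eq_swap ▸ he)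
      grind
    · exact .inl ⟨q₂, hq.dropUntil hu, by simp only [length_cons]; grind,
        hsub₂.trans (List.sublist_cons_self _ _)⟩

end SimpleGraph.Walk

section WeightedDistance

open List

variable {V : Type*} {G : SimpleGraph V} (x : Sym2 V → ℝ)

lemma walkWeight_cons {u v w : V} (h : G.Adj u v) (p : G.Walk v w) :
    walkWeight x (Walk.cons h p) = x s(u, v) + walkWeight x p := by
  simp [walkWeight]

lemma walkWeight_append {u v w : V} (p : G.Walk u v) (q : G.Walk v w) :
    walkWeight x (p.append q) = walkWeight x p + walkWeight x q := by
  simp [walkWeight, Walk.edges_append]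

lemma walkWeight_reverse {u v : V} (p : G.Walk u v) :
    walkWeight x p.reverse = walkWeight x p := by
  simp [walkWeight, Walk.edges_reverse, List.sum_reverse]

lemma walkWeight_le_of_edges_sublist {u v u' v' : V} {p : G.Walk u v} {q : G.Walk u' v'}
    (hx : ∀ e ∈ q.edges, 0 ≤ x e) (h : p.edges <+ q.edges) : walkWeight x p ≤ walkWeight x q :=
  (h.map x).sum_le_sum (by simpa using hx)

lemma exists_walkWeight_lt_of_wdist_lt {u v : V} {r : ℝ} (huv : G.Reachable u v)
    (h : wdist G x u v < r) : ∃ p : G.Walk u v, walkWeight x p < r := by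
  obtain ⟨p⟩ := huv
  obtain ⟨_, ⟨q, rfl⟩, hq⟩ :=
    exists_lt_of_csInf_lt (s := {r | ∃ p : G.Walk u v, walkWeight x p = r}) ⟨_, p, rfl⟩ h
  exact ⟨q, hq⟩

lemma one_le_walkWeight_of_odd (hx : ∀ e ∈ G.edgeSet, 0 ≤ x e)
    (hodd : ∀ (v : V) (C : G.Walk v v), C.IsCycle → Odd C.length → 1 ≤ walkWeight x C)
    {u : V} (p : G.Walk u u) (hp : Odd p.length) : 1 ≤ walkWeight x p := by
  rcases p.exists_isPath_or_odd_isCycle_of_edges_sublist with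
    ⟨q, hq, hpar, -⟩ | ⟨w, c, hc, hc', hsub⟩
  · rw [Walk.length_eq_zero_iff.2 (Walk.isPath_iff_nil.1 hq), zero_add] at hpar
    exact absurd hp (Nat.not_odd_iff_even.2 hpar)
  · exact (hodd w c hc hc').trans
      (walkWeight_le_of_edges_sublist x (fun e he => hx e (p.edges_subset_edgeSet he)) hsub)

variable {x}

lemma exists_walkWeight_lt_and_even_length_add
    (hodd : ∀ (u : V) (W : G.Walk u u), Odd W.length → 1 ≤ walkWeight x W)
    {t : V} {r : ℝ} (hr : 0 < r) {a : V} (C : G.Walk a t)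
    (hC : ∀ e ∈ C.edges, 2 * r + x e ≤ 1)
    (hlight : ∀ b ∈ C.support, ∃ Q : G.Walk b t, walkWeight x Q < r) :
    ∃ Q : G.Walk a t, walkWeight x Q < r ∧ Even (Q.length + C.length) := by
  induction C with
  | nil => exact ⟨.nil, hr, by simp⟩
  | @cons a a' t h C ih =>
    obtain ⟨Q, hQ, hpar⟩ := ih (fun e he => hC e (by simp [he]))
      (fun b hb => hlight b (by simp [hb]))
    obtain ⟨R, hR⟩ := hlight a (C.cons h).start_mem_support
    rcases Nat.even_or_odd (R.length + (C.cons h).length) with hReven | hRodd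
    · exact ⟨R, hR, hReven⟩
    have hloop := hodd a ((Walk.cons h Q).append R.reverse) (by
      simp only [Walk.length_append, Walk.length_cons, Walk.length_reverse] at hRodd ⊢
      grind)
    have hedge := hC s(a, a') (by simp)
    rw [walkWeight_append, walkWeight_cons, walkWeight_reverse] at hloop
    linarith

lemma exists_mem_support_le_wdist
    (hodd : ∀ (u : V) (W : G.Walk u u), Odd W.length → 1 ≤ walkWeight x W)
    {t : V} (C : G.Walk t t) (hC : Odd C.length) {r : ℝ} (hr : 0 < r) (hr₁ : r ≤ 1)
    (hCr : ∀ e ∈ C.edges, 2 * r + x e ≤ 1) : ∃ b ∈ C.support, r ≤ wdist G x b t := by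
  classical
  by_contra! hnear
  obtain ⟨Q, hQ, hpar⟩ := exists_walkWeight_lt_and_even_length_add hodd hr C hCr
    fun b hb => exists_walkWeight_lt_of_wdist_lt x ⟨C.dropUntil b hb⟩ (hnear b hb)
  have := hodd t Q (by grind)
  linarith

end WeightedDistance

lemma exists_pos_forall_add_le {α : Type*} (l : List α) (f : α → ℝ) {δ : ℝ}
    (h : ∀ a ∈ l, f a < δ) : ∃ ε > 0, ∀ a ∈ l, f a + ε ≤ δ := by
  induction l with
  | nil => exact ⟨1, one_pos, by simp⟩
  | cons a l ih =>
    obtain ⟨ε, hε, hl⟩ := ih fun b hb => h b (by simp [hb])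
    have ha := h a (by simp)
    refine ⟨min ε (δ - f a), lt_min hε (by linarith), ?_⟩
    simp only [List.mem_cons, forall_eq_or_imp]
    exact ⟨by linarith [min_le_right ε (δ - f a)],
      fun b hb => by linarith [hl b hb, min_le_left ε (δ - f a)]⟩

theorem stmt0_general {V : Type*} (G : SimpleGraph V) (x : Sym2 V → ℝ) (δ : ℝ)
    (hδ : δ ≤ 1)
    (hx : ∀ e ∈ G.edgeSet, 0 ≤ x e ∧ x e < δ)
    (hodd : ∀ (v : V) (C : G.Walk v v), C.IsCycle → Odd C.length → 1 ≤ walkWeight x C)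
    (v : V) (C : G.Walk v v) (hCodd : Odd C.length) :
    ∃ a ∈ C.support, ∃ b ∈ C.support, (1 - δ) / 2 < wdist G x a b := by
  have hxC : ∀ e ∈ C.edges, 0 ≤ x e ∧ x e < δ := fun e he => hx e (C.edges_subset_edgeSet he)
  obtain ⟨ε, hε, hεC⟩ := exists_pos_forall_add_le C.edges x fun e he => (hxC e he).2
  obtain ⟨e₀, he₀⟩ := List.exists_mem_of_ne_nil C.edges
    (by rw [← List.length_pos_iff, Walk.length_edges]; exact hCodd.pos)
  have hr : ∀ e ∈ C.edges, 2 * ((1 - δ) / 2 + ε / 2) + x e ≤ 1 := fun e he => by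
    linarith [hεC e he]
  obtain ⟨b, hb, hfar⟩ := exists_mem_support_le_wdist
    (fun u W => one_le_walkWeight_of_odd x (fun e he => (hx e he).1) hodd W) C hCodd
    (by linarith) (by linarith [hr e₀ he₀, (hxC e₀ he₀).1]) hr
  exact ⟨b, hb, v, C.start_mem_support, by linarith⟩

/-- If every odd cycle has total weight at least 1 and `0 ≤ x_e < δ ≤ 1` for every edge,
then every odd cycle contains a pair of vertices at distance greater than `(1 - δ)/2`. -/
theorem stmt0 {V : Type*} [Fintype V] (G : SimpleGraph V) (x : Sym2 V → ℝ) (δ : ℝ)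
    (hδ : δ ≤ 1)
    (hx : ∀ e ∈ G.edgeSet, 0 ≤ x e ∧ x e < δ)
    (hodd : ∀ (v : V) (C : G.Walk v v), C.IsCycle → Odd C.length → 1 ≤ walkWeight x C)
    (v : V) (C : G.Walk v v) (hC : C.IsCycle) (hCodd : Odd C.length) :
    ∃ a ∈ C.support, ∃ b ∈ C.support, (1 - δ) / 2 < wdist G x a b :=
  stmt0_general G x δ hδ hx hodd v C hCodd
end

section
/- Let G be a finite simple graph with nonnegative edge costs c_e and nonnegative edge weights x_e such that every odd cycle of G has total weight at least 1. Let F1 = {e : x_e ≥ 1/2} and let G' = G − F1. Let P be a random partition of the vertex set such that, almost surely, d_{x,G'}(u,v) ≤ 1/4 for every pair of vertices u, v in the same cluster, and such that Pr[P(u) ≠ P(v)] ≤ 4D·x_{uv} for every edge uv of G', where D ≥ 0. Let F2 be the (random) set of edges uv of G' with P(u) ≠ P(v). Then G − (F1 ∪ F2) is almost surely bipartite, and the expected total cost satisfies E[ Σ_{e ∈ F1 ∪ F2} c_e ] ≤ (2 + 4D) · Σ_{e ∈ E(G)} c_e x_e. -/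
open SimpleGraph

/-!
Every edge of `G' = G − F1` has weight `< 1/2`, and every closed walk of odd length has weight at
least `1`: split it at a repeated vertex into two shorter closed walks, one of which is odd, until
an odd cycle remains. A component of `G − (F1 ∪ F2)` lies in one cluster, so each of its vertices
is joined to a fixed root by a `G'`-walk of weight barely above `1/4`; colour the vertex by the
parity of that walk. The walks to the two ends of a surviving edge, together with that edge, close
up to a walk of weight `< 1` (the finitely many edge weights of `G'` stay below `1/2` by a margin),
which therefore has even length: the colours differ. The cost bound is the union bound:
`c_e ≤ 2 c_e x_e` on `F1`, and an edge of `G'` lands in `F2` with probability at most `4D x_e`.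
-/

namespace SimpleGraph.Walk

variable {V : Type*} {G H : SimpleGraph V} {x : Sym2 V → ℝ} {u v w : V}

lemma walkWeight_nonneg (hx : ∀ e ∈ G.edgeSet, 0 ≤ x e) (p : G.Walk u v) :
    0 ≤ walkWeight x p :=
  List.sum_nonneg <| by
    simpa using fun e he => hx e (p.edges_subset_edgeSet he)

lemma walkWeight_cons (h : G.Adj u v) (p : G.Walk v w) :
    walkWeight x (cons h p) = x s(u, v) + walkWeight x p := by
  simp [walkWeight]

lemma walkWeight_append (p : G.Walk u v) (q : G.Walk v w) :
    walkWeight x (p.append q) = walkWeight x p + walkWeight x q := by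
  simp [walkWeight]

lemma walkWeight_reverse (p : G.Walk u v) : walkWeight x p.reverse = walkWeight x p := by
  simp [walkWeight]

lemma walkWeight_eq_of_perm {u' v' : V} {p : G.Walk u v} {q : H.Walk u' v'}
    (h : p.edges.Perm q.edges) : walkWeight x p = walkWeight x q :=
  (h.map x).sum_eq

lemma walkWeight_mapLe (hGH : G ≤ H) (p : G.Walk u v) :
    walkWeight x (p.mapLe hGH) = walkWeight x p :=
  walkWeight_eq_of_perm (by rw [edges_mapLe_eq_edges])

lemma walkWeight_copy {u' v' : V} (p : G.Walk u v) (hu : u = u') (hv : v = v') :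
    walkWeight x (p.copy hu hv) = walkWeight x p := by
  subst hu hv; rfl

lemma length_ne_one (p : G.Walk v v) : p.length ≠ 1 := by
  cases p with
  | nil => simp
  | cons h q => cases q with
    | nil => exact (G.irrefl h).elim
    | cons => simp

lemma exists_append_perm_edges [DecidableEq V] (p : G.Walk v v) (hp : ¬ p.support.tail.Nodup) :
    ∃ (u : V) (c₁ c₂ : G.Walk u u), ¬ c₁.Nil ∧ ¬ c₂.Nil ∧ (c₁.append c₂).edges.Perm p.edges := by
  obtain ⟨u, hdup⟩ := List.exists_duplicate_iff_not_nodup.mpr hp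
  have hu : u ∈ p.support := List.mem_of_mem_tail hdup.mem
  have hcount : 2 ≤ (p.rotate u hu).support.tail.count u := by
    rw [(support_rotate p u hu).perm.count_eq]
    exact List.duplicate_iff_two_le_count.mp hdup
  generalize hr : p.rotate u hu = p' at hcount
  cases p' with
  | nil => simp at hcount
  | cons h q =>
    have hcq : 2 ≤ q.support.count u := by simpa using hcount
    have hu' : u ∈ q.support := List.count_pos_iff.mp (by omega)
    refine ⟨u, cons h (q.takeUntil u hu'), q.dropUntil u hu', not_nil_cons, fun hnil => ?_, ?_⟩
    · rw [← q.take_spec hu', support_append, List.count_append,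
        count_support_takeUntil_eq_one, hnil.eq_nil] at hcq
      simp at hcq
    · rw [cons_append, take_spec, ← hr]
      exact (rotate_edges p u hu).perm

lemma isCycle_of_nodup_support_tail {p : G.Walk v v} (hp : p.support.tail.Nodup)
    (hodd : Odd p.length) : p.IsCycle := by
  have hnil : ¬ p.Nil := fun h => by simp [h.length_eq_zero] at hodd
  refine isCycle_iff_isPath_tail_and_le_length.mpr ⟨?_, ?_⟩
  · rwa [isPath_def, support_tail_of_not_nil p hnil]
  · obtain ⟨k, hk⟩ := hodd
    have := p.length_ne_one
    omega

end SimpleGraph.Walk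

namespace SimpleGraph

variable {V : Type*} {G H K : SimpleGraph V} {x : Sym2 V → ℝ} {u v : V}

/-- The constraint of the odd cycle relaxation of `Min-Uncut`. -/
def IsFractionalOddCycleCover (G : SimpleGraph V) (x : Sym2 V → ℝ) : Prop :=
  ∀ (v : V) (c : G.Walk v v), c.IsCycle → Odd c.length → 1 ≤ walkWeight x c

lemma IsFractionalOddCycleCover.mono (hcyc : G.IsFractionalOddCycleCover x) (hHG : H ≤ G) :
    H.IsFractionalOddCycleCover x := fun v c hc ho => by
  simpa [Walk.walkWeight_mapLe] using hcyc v (c.mapLe hHG) (hc.mapLe hHG) (by simpa using ho)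

lemma IsFractionalOddCycleCover.one_le_walkWeight_of_odd_length
    (hcyc : G.IsFractionalOddCycleCover x) (hx : ∀ e ∈ G.edgeSet, 0 ≤ x e) (p : G.Walk v v)
    (hodd : Odd p.length) : 1 ≤ walkWeight x p := by
  classical
  induction h : p.length using Nat.strong_induction_on generalizing v with
  | _ n ih =>
  subst h
  by_cases hp : p.support.tail.Nodup
  · exact hcyc v p (Walk.isCycle_of_nodup_support_tail hp hodd) hodd
  obtain ⟨u, c₁, c₂, hc₁, hc₂, hperm⟩ := p.exists_append_perm_edges hp
  have hlen : c₁.length + c₂.length = p.length := by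
    simpa using hperm.length_eq
  have hwt : walkWeight x c₁ + walkWeight x c₂ = walkWeight x p := by
    rw [← Walk.walkWeight_append, Walk.walkWeight_eq_of_perm hperm]
  have h₁ := Walk.not_nil_iff_lt_length.mp hc₁
  have h₂ := Walk.not_nil_iff_lt_length.mp hc₂
  rcases Nat.even_or_odd c₁.length with hev | hodd₁
  · have hodd₂ : Odd c₂.length := by
      rw [← hlen] at hodd; exact (Nat.odd_add'.mp hodd).mpr hev
    linarith [ih _ (by omega) c₂ hodd₂ rfl, Walk.walkWeight_nonneg hx c₁]
  · linarith [ih _ (by omega) c₁ hodd₁ rfl, Walk.walkWeight_nonneg hx c₂]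

/-- Reachability is needed: between unreachable vertices `wdist` is `sInf ∅ = 0`. -/
lemma Reachable.exists_walkWeight_lt (huv : G.Reachable u v) {r : ℝ} (hr : wdist G x u v < r) :
    ∃ p : G.Walk u v, walkWeight x p < r := by
  obtain ⟨p₀⟩ := huv
  obtain ⟨_, ⟨p, rfl⟩, hp⟩ := exists_lt_of_csInf_lt (by exact ⟨_, p₀, rfl⟩) hr
  exact ⟨p, hp⟩

lemma Reachable.eq_of_forall_adj {α : Type*} {f : V → α} (hf : ∀ a b, G.Adj a b → f a = f b)
    (huv : G.Reachable u v) : f u = f v := by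
  obtain ⟨p⟩ := huv
  induction p with
  | nil => rfl
  | cons hab _ ih => exact (hf _ _ hab).trans ih

lemma Adj.natCast_length_ne_of_walkWeight_lt_one {a b w : V} (hab : G.Adj a b)
    (hcyc : G.IsFractionalOddCycleCover x) (hx : ∀ e ∈ G.edgeSet, 0 ≤ x e)
    (qa : G.Walk w a) (qb : G.Walk w b)
    (hlt : walkWeight x qa + x s(a, b) + walkWeight x qb < 1) :
    (qa.length : ZMod 2) ≠ qb.length := by
  intro heq
  have hodd : Odd (qa.append (Walk.cons hab qb.reverse)).length := by
    rw [Walk.length_append, Walk.length_cons, Walk.length_reverse, Nat.odd_iff]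
    have := (ZMod.natCast_eq_natCast_iff' _ _ 2).mp heq
    omega
  have := hcyc.one_le_walkWeight_of_odd_length hx _ hodd
  rw [Walk.walkWeight_append, Walk.walkWeight_cons, Walk.walkWeight_reverse] at this
  linarith

lemma colorable_two_of_reachable_wdist_le (hcyc : H.IsFractionalOddCycleCover x)
    (hx : ∀ e ∈ H.edgeSet, 0 ≤ x e) (hKH : K ≤ H)
    {S : ℝ} (hS : S < 1 / 2) (hKx : ∀ e ∈ K.edgeSet, x e ≤ S)
    (hdiam : ∀ u v, K.Reachable u v → wdist H x u v ≤ 1 / 4) : K.Colorable 2 := by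
  obtain ⟨ε, hε, hεS⟩ : ∃ ε, 0 < ε ∧ 2 * ε + S < 1 / 2 :=
    ⟨(1 / 2 - S) / 4, by linarith, by linarith⟩
  have hroot (u : V) : K.Reachable (K.connectedComponentMk u).out u :=
    ConnectedComponent.exact (K.connectedComponentMk u).out_eq
  have hwalk (u : V) : ∃ q : H.Walk (K.connectedComponentMk u).out u, walkWeight x q < 1 / 4 + ε :=
    ((hroot u).mono hKH).exists_walkWeight_lt (by linarith [hdiam _ _ (hroot u)])
  choose q hq using hwalk
  suffices C : K.Coloring (ZMod 2) by simpa using C.colorable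
  refine Coloring.mk (fun u => ((q u).length : ZMod 2)) fun {a b} hab => ?_
  have hr : (K.connectedComponentMk a).out = (K.connectedComponentMk b).out := by
    rw [ConnectedComponent.connectedComponentMk_eq_of_adj hab]
  have := (hKH hab).natCast_length_ne_of_walkWeight_lt_one hcyc hx (q a) ((q b).copy hr.symm rfl)
    (by rw [Walk.walkWeight_copy]; linarith [hq a, hq b, hKx _ (K.mem_edgeSet.mpr hab)])
  simpa using this

end SimpleGraph

lemma Set.Finite.exists_lt_forall_le {α β : Type*} [LinearOrder β] [NoMinOrder β] {s : Set α}
    (hs : s.Finite) {f : α → β} {b : β} (h : ∀ a ∈ s, f a < b) : ∃ c < b, ∀ a ∈ s, f a ≤ c := by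
  rcases s.eq_empty_or_nonempty with rfl | hne
  · obtain ⟨c, hc⟩ := exists_lt b
    exact ⟨c, hc, by simp⟩
  · obtain ⟨a, ha, hmax⟩ := Set.exists_max_image s f hs hne
    exact ⟨f a, h a ha, hmax⟩

lemma Set.indicator_union_le_add {α M : Type*} [AddCommMonoid M] [PartialOrder M]
    [IsOrderedAddMonoid M] {s t : Set α} {f : α → M} {a : α} (hf : 0 ≤ f a) :
    (s ∪ t).indicator f a ≤ s.indicator f a + t.indicator f a := by
  rw [← Set.indicator_union_add_inter_apply]
  exact le_add_of_nonneg_right (Set.indicator_apply_nonneg fun _ => hf)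

lemma Set.indicator_le_two_mul_mul {α : Type*} {s : Set α} {c x : α → ℝ} {a : α}
    (hs : ∀ b ∈ s, 1 / 2 ≤ x b) (hc : 0 ≤ c a) (hx : 0 ≤ x a) :
    s.indicator c a ≤ 2 * (c a * x a) := by
  by_cases ha : a ∈ s
  · rw [Set.indicator_of_mem ha]
    nlinarith [hs a ha]
  · rw [Set.indicator_of_notMem ha]
    positivity

open Classical in
lemma sum_mul_indicator_union_le {Ω α : Type*} [Fintype Ω] {μ : Ω → ℝ} (hμ0 : ∀ ω, 0 ≤ μ ω)
    (hμ1 : ∑ ω, μ ω = 1) (s : Set α) (t : Ω → Set α) {f : α → ℝ} {a : α} (hf : 0 ≤ f a) :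
    ∑ ω, μ ω * (s ∪ t ω).indicator f a ≤
      s.indicator f a + (∑ ω, if a ∈ t ω then μ ω else 0) * f a :=
  calc ∑ ω, μ ω * (s ∪ t ω).indicator f a
      ≤ ∑ ω, (μ ω * s.indicator f a + (if a ∈ t ω then μ ω else 0) * f a) := by
        gcongr with ω
        have ht : (if a ∈ t ω then μ ω else 0) * f a = μ ω * (t ω).indicator f a := by
          rw [Set.indicator_apply, mul_ite, ite_mul, zero_mul, mul_zero]
        rw [ht, ← mul_add]
        exact mul_le_mul_of_nonneg_left (Set.indicator_union_le_add hf) (hμ0 ω)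
    _ = s.indicator f a + (∑ ω, if a ∈ t ω then μ ω else 0) * f a := by
        rw [Finset.sum_add_distrib, ← Finset.sum_mul, ← Finset.sum_mul, hμ1, one_mul]

open Classical in
lemma sum_mul_indicator_union_le_mul {Ω α : Type*} [Fintype Ω] {μ : Ω → ℝ}
    (hμ0 : ∀ ω, 0 ≤ μ ω) (hμ1 : ∑ ω, μ ω = 1) {s : Set α} {t : Ω → Set α} {c x : α → ℝ} {a : α}
    {B : ℝ} (hs : ∀ b ∈ s, 1 / 2 ≤ x b) (ht : ∑ ω, (if a ∈ t ω then μ ω else 0) ≤ B * x a)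
    (hc : 0 ≤ c a) (hx : 0 ≤ x a) :
    ∑ ω, μ ω * (s ∪ t ω).indicator c a ≤ (2 + B) * (c a * x a) :=
  calc ∑ ω, μ ω * (s ∪ t ω).indicator c a
      ≤ s.indicator c a + (∑ ω, if a ∈ t ω then μ ω else 0) * c a :=
        sum_mul_indicator_union_le hμ0 hμ1 s t hc
    _ ≤ 2 * (c a * x a) + B * x a * c a := by
        gcongr
        exact Set.indicator_le_two_mul_mul hs hc hx
    _ = (2 + B) * (c a * x a) := by ring

open Classical in
lemma sum_ite_mem_cut_le {V Ω α : Type*} [Fintype Ω] [DecidableEq α] {μ : Ω → ℝ} {P : Ω → V → α}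
    {H : SimpleGraph V} {t : Ω → Set (Sym2 V)}
    (ht : ∀ ω, t ω = {e | e ∈ H.edgeSet ∧ ∃ a b, e = s(a, b) ∧ P ω a ≠ P ω b}) {f : Sym2 V → ℝ}
    (hcut : ∀ u v, H.Adj u v → ∑ ω, (if P ω u ≠ P ω v then μ ω else 0) ≤ f s(u, v))
    (e : Sym2 V) (hf : 0 ≤ f e) :
    ∑ ω, (if e ∈ t ω then μ ω else 0) ≤ f e := by
  induction e using Sym2.ind with
  | _ u v =>
  by_cases he : H.Adj u v
  · convert hcut u v he using 4 with ω
    simp only [ht, Set.mem_ofPred_eq, mem_edgeSet, he, true_and, Sym2.eq_iff]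
    constructor
    · rintro ⟨a, b, (⟨rfl, rfl⟩ | ⟨rfl, rfl⟩), hab⟩ <;> [exact hab; exact hab.symm]
    · exact fun h => ⟨u, v, Or.inl ⟨rfl, rfl⟩, h⟩
  · simpa [ht, he] using hf

theorem stmt12_general {V : Type*} [Fintype V] (G : SimpleGraph V)
    [DecidableRel G.Adj]
    (cost x : Sym2 V → ℝ)
    (hcost : ∀ e ∈ G.edgeSet, 0 ≤ cost e) (hx : ∀ e ∈ G.edgeSet, 0 ≤ x e)
    (hodd : ∀ (v : V) (C : G.Walk v v), C.IsCycle → Odd C.length → 1 ≤ walkWeight x C)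
    (F1 : Set (Sym2 V)) (hF1 : F1 = {e ∈ G.edgeSet | 1 / 2 ≤ x e})
    (G' : SimpleGraph V) (hG' : G' = G.deleteEdges F1)
    (D : ℝ) (hD : 0 ≤ D)
    (Ω : Type*) [Fintype Ω] (μ : Ω → ℝ) (hμ0 : ∀ ω, 0 ≤ μ ω) (hμ1 : ∑ ω, μ ω = 1)
    (P : Ω → V → ℕ)
    (hdiam : ∀ ω, 0 < μ ω → ∀ u v, P ω u = P ω v → wdist G' x u v ≤ 1 / 4)
    (hcut : ∀ u v, G'.Adj u v →
      ∑ ω, (if P ω u ≠ P ω v then μ ω else 0) ≤ 4 * D * x s(u, v))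
    (F2 : Ω → Set (Sym2 V))
    (hF2 : ∀ ω, F2 ω = {e | e ∈ G'.edgeSet ∧ ∃ u v, e = s(u, v) ∧ P ω u ≠ P ω v}) :
    (∀ ω, 0 < μ ω → (G.deleteEdges (F1 ∪ F2 ω)).Colorable 2) ∧
      ∑ ω, μ ω * ∑ e ∈ G.edgeFinset, Set.indicator (F1 ∪ F2 ω) cost e ≤
        (2 + 4 * D) * ∑ e ∈ G.edgeFinset, cost e * x e := by
  have hG'G : G' ≤ G := hG' ▸ G.deleteEdges_le F1
  refine ⟨fun ω hω => ?_, ?_⟩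
  · have hG'x : ∀ e ∈ G'.edgeSet, x e < 1 / 2 := by
      rw [hG', edgeSet_deleteEdges, hF1]
      exact fun e he => lt_of_not_ge fun h => he.2 ⟨he.1, h⟩
    obtain ⟨S, hS, hSx⟩ := G'.edgeSet.toFinite.exists_lt_forall_le hG'x
    have hKG' : G.deleteEdges (F1 ∪ F2 ω) ≤ G' := hG' ▸ G.deleteEdges_anti Set.subset_union_left
    have hKP (a b : V) (hab : (G.deleteEdges (F1 ∪ F2 ω)).Adj a b) : P ω a = P ω b := by
      by_contra hne
      exact (G.deleteEdges_adj.mp hab).2 (Or.inr (hF2 ω ▸ ⟨hKG' hab, a, b, rfl, hne⟩))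
    exact colorable_two_of_reachable_wdist_le (IsFractionalOddCycleCover.mono hodd hG'G)
      (fun e he => hx e (edgeSet_mono hG'G he)) hKG' hS (fun e he => hSx e (edgeSet_mono hKG' he))
      fun u v huv => hdiam ω hω u v (huv.eq_of_forall_adj hKP)
  · simp_rw [Finset.mul_sum]
    rw [Finset.sum_comm]
    refine Finset.sum_le_sum fun e he => ?_
    replace he := mem_edgeFinset.mp he
    have hPr := sum_ite_mem_cut_le (f := fun e => 4 * D * x e) hF2 hcut e
      (by have := hx e he; positivity)
    exact sum_mul_indicator_union_le_mul hμ0 hμ1 (fun e he => (hF1 ▸ he).2) hPr (hcost e he)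
      (hx e he)

/-- Rounding analysis for `Min-Uncut`: deleting the heavy edges `F1` and the (random)
inter-cluster edges `F2` of a low diameter decomposition leaves a bipartite graph almost
surely, with expected deleted cost at most `(2 + 4D) · Σ c_e x_e`. -/
theorem stmt12 {V : Type*} [Fintype V] [DecidableEq V] (G : SimpleGraph V)
    [DecidableRel G.Adj]
    (cost x : Sym2 V → ℝ)
    (hcost : ∀ e ∈ G.edgeSet, 0 ≤ cost e) (hx : ∀ e ∈ G.edgeSet, 0 ≤ x e)
    (hodd : ∀ (v : V) (C : G.Walk v v), C.IsCycle → Odd C.length → 1 ≤ walkWeight x C)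
    (F1 : Set (Sym2 V)) (hF1 : F1 = {e ∈ G.edgeSet | 1 / 2 ≤ x e})
    (G' : SimpleGraph V) (hG' : G' = G.deleteEdges F1)
    (D : ℝ) (hD : 0 ≤ D)
    (Ω : Type*) [Fintype Ω] (μ : Ω → ℝ) (hμ0 : ∀ ω, 0 ≤ μ ω) (hμ1 : ∑ ω, μ ω = 1)
    (P : Ω → V → ℕ)
    (hdiam : ∀ ω, 0 < μ ω → ∀ u v, P ω u = P ω v → wdist G' x u v ≤ 1 / 4)
    (hcut : ∀ u v, G'.Adj u v →
      ∑ ω, (if P ω u ≠ P ω v then μ ω else 0) ≤ 4 * D * x s(u, v))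
    (F2 : Ω → Set (Sym2 V))
    (hF2 : ∀ ω, F2 ω = {e | e ∈ G'.edgeSet ∧ ∃ u v, e = s(u, v) ∧ P ω u ≠ P ω v}) :
    (∀ ω, 0 < μ ω → (G.deleteEdges (F1 ∪ F2 ω)).Colorable 2) ∧
      ∑ ω, μ ω * ∑ e ∈ G.edgeFinset, Set.indicator (F1 ∪ F2 ω) cost e ≤
        (2 + 4 * D) * ∑ e ∈ G.edgeFinset, cost e * x e :=
  stmt12_general G cost x hcost hx hodd F1 hF1 G' hG' D hD Ω μ hμ0 hμ1 P hdiam hcut F2 hF2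
end

section
/- Let (G, c) be a Max-2Lin_k instance with nonnegative edge weights x such that every inconsistent simple cycle of G has total weight at least 1. Then every closed walk in G whose label sum (the sum of the constants c along the walk) is nonzero in ZMod k has total weight at least 1, where edge weights are counted with multiplicity along the walk. -/
open SimpleGraph

/-- The label sum of a walk: `c_{v_0 v_1} + c_{v_1 v_2} + ⋯ + c_{v_{l-1} v_l}`. -/
def walkSum {V : Type*} {k : ℕ} {G : SimpleGraph V} (c : V → V → ZMod k) {u v : V}
    (p : G.Walk u v) : ZMod k :=
  (p.darts.map (fun d => c d.fst d.snd)).sum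

/-!
Strong induction on the length of the closed walk. A closed walk that is not a simple cycle
either backtracks along a single edge, where the antisymmetry of `c` makes its label sum vanish,
or its darts can be rearranged into two strictly shorter closed walks. Label sum and weight are
additive over such a split, so one of the two parts has nonzero label sum, hence weight at least 1
by induction, and the other part has nonnegative weight.
-/

namespace SimpleGraph.Walk

variable {V : Type*} {G : SimpleGraph V}

lemma exists_eq_append_append_of_not_nodup_support {u v : V} (p : G.Walk u v)
    (hp : ¬p.support.Nodup) :
    ∃ (a : V) (p₁ : G.Walk u a) (C : G.Walk a a) (p₂ : G.Walk a v),
      ¬C.Nil ∧ p = p₁.append (C.append p₂) := by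
  classical
  induction p with
  | nil => simp at hp
  | @cons u w v h q ih =>
    rw [support_cons, List.nodup_cons, not_and_or, not_not] at hp
    rcases hp with hu | hq
    · exact ⟨u, nil, cons h (q.takeUntil u hu), q.dropUntil u hu, not_nil_cons,
        by simp [q.take_spec hu]⟩
    · obtain ⟨a, q₁, C, q₂, hC, rfl⟩ := ih hq
      exact ⟨a, cons h q₁, C, q₂, hC, rfl⟩

lemma cons_eq_backtrack_or_darts_perm_append_of_not_isCycle {u w : V} (h : G.Adj u w)
    (p : G.Walk w u) (hc : ¬(cons h p).IsCycle) :
    p = h.symm.toWalk ∨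
      ∃ (a b : V) (W₁ : G.Walk a a) (W₂ : G.Walk b b),
        W₁.length < (cons h p).length ∧ W₂.length < (cons h p).length ∧
          (cons h p).darts.Perm (W₁.darts ++ W₂.darts) := by
  rw [cons_isCycle_iff, not_and_or, not_not] at hc
  by_cases hp : p.IsPath
  · exact .inl (hp.eq_adj_toWalk_of_mem_edges (Sym2.eq_swap ▸ hc.resolve_left (not_not.2 hp)))
  obtain ⟨a, p₁, C, p₂, hC, rfl⟩ :=
    p.exists_eq_append_append_of_not_nodup_support (by rwa [isPath_def] at hp)
  have hCpos : 0 < C.length := not_nil_iff_lt_length.mp hC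
  refine .inr ⟨u, a, cons h (p₁.append p₂), C, ?_, ?_, ?_⟩
  · simp only [length_cons, length_append]
    omega
  · simp only [length_cons, length_append]
    omega
  · simp only [darts_cons, darts_append, List.cons_append, List.perm_cons]
    rw [List.append_assoc]
    exact List.perm_append_comm.append_left _

end SimpleGraph.Walk

section

variable {V : Type*} {G : SimpleGraph V} {a b u : V}

lemma walkSum_eq_add_of_darts_perm {k : ℕ} (c : V → V → ZMod k) {W : G.Walk u u}
    {W₁ : G.Walk a a} {W₂ : G.Walk b b} (h : W.darts.Perm (W₁.darts ++ W₂.darts)) :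
    walkSum c W = walkSum c W₁ + walkSum c W₂ := by
  simp only [walkSum, (h.map _).sum_eq, List.map_append, List.sum_append]

lemma walkWeight_eq_add_of_darts_perm (x : Sym2 V → ℝ) {W : G.Walk u u}
    {W₁ : G.Walk a a} {W₂ : G.Walk b b} (h : W.darts.Perm (W₁.darts ++ W₂.darts)) :
    walkWeight x W = walkWeight x W₁ + walkWeight x W₂ := by
  simp only [walkWeight, Walk.edges_eq_map_darts, List.map_map,
    (h.map _).sum_eq, List.map_append, List.sum_append]

lemma walkWeight_nonneg {x : Sym2 V → ℝ} (hx : ∀ e ∈ G.edgeSet, 0 ≤ x e) {v : V}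
    (p : G.Walk u v) : 0 ≤ walkWeight x p :=
  List.sum_nonneg fun _ hmem ↦ by
    obtain ⟨e, he, rfl⟩ := List.mem_map.mp hmem
    exact hx e (p.edges_subset_edgeSet he)

lemma walkSum_backtrack {k : ℕ} {c : V → V → ZMod k} (hc : ∀ u v, G.Adj u v → c v u = -c u v)
    {w : V} (h : G.Adj u w) : walkSum c (Walk.cons h h.symm.toWalk) = 0 := by
  simp [walkSum, hc u w h]

end

theorem stmt14_general {V : Type*} {k : ℕ} (G : SimpleGraph V)
    (c : V → V → ZMod k) (hc : ∀ u v, G.Adj u v → c v u = -c u v)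
    (x : Sym2 V → ℝ) (hx : ∀ e ∈ G.edgeSet, 0 ≤ x e)
    (hincons : ∀ (v : V) (C : G.Walk v v), C.IsCycle → walkSum c C ≠ 0 →
      1 ≤ walkWeight x C)
    (v : V) (W : G.Walk v v) (hW : walkSum c W ≠ 0) :
    1 ≤ walkWeight x W := by
  induction hn : W.length using Nat.strong_induction_on generalizing v with
  | _ n ih =>
    by_cases hcyc : W.IsCycle
    · exact hincons v W hcyc hW
    cases W with
    | nil => simp [walkSum] at hW
    | cons h p =>
      rcases Walk.cons_eq_backtrack_or_darts_perm_append_of_not_isCycle h p hcyc with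
        rfl | ⟨a, b, W₁, W₂, hW₁, hW₂, hperm⟩
      · exact absurd (walkSum_backtrack hc h) hW
      rw [walkSum_eq_add_of_darts_perm c hperm] at hW
      rw [walkWeight_eq_add_of_darts_perm x hperm]
      have hW₁nonneg := walkWeight_nonneg hx W₁
      have hW₂nonneg := walkWeight_nonneg hx W₂
      by_cases hW₁zero : walkSum c W₁ = 0
      · have := ih _ (hn ▸ hW₂) b W₂ (by simpa [hW₁zero] using hW) rfl
        linarith
      · have := ih _ (hn ▸ hW₁) a W₁ hW₁zero rfl
        linarith

/-- If every inconsistent simple cycle of a `Max-2Lin_k` instance has total weight at least 1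
(with nonnegative edge weights), then every closed walk with nonzero label sum has total
weight at least 1. -/
theorem stmt14 {V : Type*} [Fintype V] {k : ℕ} (hk : 1 ≤ k) (G : SimpleGraph V)
    (c : V → V → ZMod k) (hc : ∀ u v, G.Adj u v → c v u = -c u v)
    (x : Sym2 V → ℝ) (hx : ∀ e ∈ G.edgeSet, 0 ≤ x e)
    (hincons : ∀ (v : V) (C : G.Walk v v), C.IsCycle → walkSum c C ≠ 0 →
      1 ≤ walkWeight x C)
    (v : V) (W : G.Walk v v) (hW : walkSum c W ≠ 0) :
    1 ≤ walkWeight x W :=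
  stmt14_general G c hc x hx hincons v W hW
end
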